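/- arXiv:2110.15694 — 5 statements merged into one kernel-verified Lean document; each statement's English description precedes it below -/
import Mathlib

section
/- Let M be a σ-compact, locally compact metric space and let T : C(M, ℝ) → ℝ be a linear functional that is continuous for the compact-open topology. Then T is a pointwise limit of finite linear combinations of point-evaluation functionals: there exist functionals T_n, each of the form f ↦ Σ_{i=1}^{k_n} a_{n,i} f(x_{n,i}) with a_{n,i} ∈ ℝ and x_{n,i} ∈ M, such that T_n(f) → T(f) for every f ∈ C(M, ℝ). -/
open Filter Topology Metric

/-!
Cover the `n`-th set of a compact exhaustion by finitely many balls of radius `1 / (n + 1)`,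
with centers `c i`, and take a partition of unity `ρ i` subordinate to these balls. The
quasi-interpolants `∑ i, f (c i) • ρ i` are, at each point `y`, convex combinations of values of
`f` at points within `1 / (n + 1)` of `y`, so they converge to `f` uniformly on compact sets.
Applying the continuous linear functional `T` gives `∑ i, T (ρ i) * f (c i) → T f`.
-/

section PseudoMetric

variable {X : Type*} [PseudoMetricSpace X]

theorem IsCompact.exists_pos_forall_dist_lt {Y : Type*} [PseudoMetricSpace Y] {s : Set X}
    (hs : IsCompact s) {f : X → Y} (hf : Continuous f) {ε : ℝ} (hε : 0 < ε) :
    ∃ δ > 0, ∀ y ∈ s, ∀ z, dist y z < δ → dist (f y) (f z) < ε := by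
  obtain ⟨δ, hδ, h⟩ := mem_uniformity_dist.1 <|
    hs.uniformContinuousAt_of_continuousAt f (fun _ _ => hf.continuousAt) (dist_mem_uniformity hε)
  exact ⟨δ, hδ, fun y hy z hyz => h hyz hy⟩

namespace PartitionOfUnity

variable {ι : Type*} [Fintype ι] {s : Set X}

theorem dist_sum_smul_le {E : Type*} [NormedAddCommGroup E] [NormedSpace ℝ E]
    (ρ : PartitionOfUnity ι X s) {c : ι → X} {δ : ℝ}
    (hρ : ρ.IsSubordinate fun i => ball (c i) δ) {f : X → E} {y : X} (hy : y ∈ s) {ε : ℝ}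
    (hf : ∀ z, dist y z < δ → dist (f y) (f z) ≤ ε) :
    dist (∑ i, ρ i y • f (c i)) (f y) ≤ ε := by
  rw [← finsum_eq_sum_of_fintype, ← mem_closedBall]
  refine ρ.finsum_smul_mem_convex (g := fun i _ => f (c i)) hy
    (fun i hi => mem_closedBall'.2 (hf _ ?_)) (convex_closedBall _ _)
  exact mem_ball.1 (hρ i (subset_tsupport _ hi))

def quasiInterpolant (ρ : PartitionOfUnity ι X s) (c : ι → X) (f : C(X, ℝ)) : C(X, ℝ) :=
  ∑ i, f (c i) • ρ i

theorem quasiInterpolant_apply (ρ : PartitionOfUnity ι X s) (c : ι → X) (f : C(X, ℝ)) (y : X) :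
    ρ.quasiInterpolant c f y = ∑ i, ρ i y • f (c i) := by
  simp [quasiInterpolant, mul_comm]

end PartitionOfUnity

open PartitionOfUnity in
theorem tendsto_quasiInterpolant {β : Type*} {l : Filter β} {ι : β → Type*}
    [∀ b, Fintype (ι b)] {K : β → Set X} (ρ : ∀ b, PartitionOfUnity (ι b) X (K b))
    (c : ∀ b, ι b → X) {δ : β → ℝ} (hρ : ∀ b, (ρ b).IsSubordinate fun i => ball (c b i) (δ b))
    (hδ : Tendsto δ l (𝓝 0)) (hK : ∀ C, IsCompact C → ∀ᶠ b in l, C ⊆ K b) (f : C(X, ℝ)) :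
    Tendsto (fun b => (ρ b).quasiInterpolant (c b) f) l (𝓝 f) := by
  rw [ContinuousMap.tendsto_iff_forall_isCompact_tendstoUniformlyOn]
  intro C hC
  rw [Metric.tendstoUniformlyOn_iff]
  intro ε hε
  obtain ⟨η, hη, hf⟩ := hC.exists_pos_forall_dist_lt f.continuous (half_pos hε)
  filter_upwards [hK C hC, hδ.eventually (gt_mem_nhds hη)] with b hCK hδη y hy
  rw [dist_comm, quasiInterpolant_apply]
  exact ((ρ b).dist_sum_smul_le (hρ b) (hCK hy) fun z hz =>
    (hf y hy z (hz.trans hδη)).le).trans_lt (half_lt_self hε)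

end PseudoMetric

theorem IsCompact.exists_partitionOfUnity_ball {X : Type*} [MetricSpace X] {K : Set X}
    (hK : IsCompact K) {δ : ℝ} (hδ : 0 < δ) :
    ∃ (k : ℕ) (ρ : PartitionOfUnity (Fin k) X K) (c : Fin k → X),
      ρ.IsSubordinate fun i => ball (c i) δ := by
  obtain ⟨t, -, ht, hKt⟩ := hK.finite_cover_balls hδ
  obtain ⟨k, c, -, rfl⟩ := ht.fin_param
  rw [Set.biUnion_range] at hKt
  obtain ⟨ρ, hρ⟩ := PartitionOfUnity.exists_isSubordinate hK.isClosed _ (fun _ => isOpen_ball) hKt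
  exact ⟨k, ρ, c, hρ⟩

theorem CompactExhaustion.eventually_superset_of_isCompact {X : Type*} [TopologicalSpace X]
    (K : CompactExhaustion X) {C : Set X} (hC : IsCompact C) : ∀ᶠ n in atTop, C ⊆ K n :=
  let ⟨m, hm⟩ := K.exists_superset_of_isCompact hC
  (eventually_ge_atTop m).mono fun _ hn => hm.trans (K.subset hn)

/-- Every linear functional `T` on `C(M, ℝ)` (compact-open topology,
`M` a σ-compact locally compact metric space) that is continuous is a pointwise limit of
finite linear combinations of point-evaluation functionals. -/
theorem stmt_4 {M : Type*} [MetricSpace M] [SigmaCompactSpace M] [LocallyCompactSpace M]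
    (T : C(M, ℝ) →ₗ[ℝ] ℝ) (hT : Continuous T) :
    ∃ (k : ℕ → ℕ) (a : ∀ n, Fin (k n) → ℝ) (x : ∀ n, Fin (k n) → M),
      ∀ f : C(M, ℝ),
        Tendsto (fun n => ∑ i, a n i * f (x n i)) atTop (𝓝 (T f)) := by
  let K := CompactExhaustion.choice M
  choose k ρ c hρ using fun n : ℕ =>
    (K.isCompact n).exists_partitionOfUnity_ball (Nat.one_div_pos_of_nat (α := ℝ) (n := n))
  refine ⟨k, fun n i => T (ρ n i), c, fun f => ?_⟩
  have hlim := (hT.tendsto f).comp <| tendsto_quasiInterpolant ρ c hρ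
    tendsto_one_div_add_atTop_nhds_zero_nat (fun _ => K.eventually_superset_of_isCompact) f
  simpa [Function.comp_def, PartitionOfUnity.quasiInterpolant, map_sum, mul_comm] using hlim
end

section
/- Let F be a separable real Banach space, let (f_n)_{n ∈ ℕ} be a sequence in F, and let (ξ_n)_{n ∈ ℕ} be a sequence of independent standard Gaussian random variables on a probability space (Ω, 𝔖, P). Assume that the partial sums Σ_{n ≤ N} ξ_n f_n converge almost surely in F, as N → ∞, to a random element X of F. Then the topological support of the law of X equals the closed linear span of {f_n : n ∈ ℕ} in F. -/
open MeasureTheory ProbabilityTheory Filter Topology Finset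

/-!
A point of the closed span is approximated by some `y = ∑_{n < N} c n • f n`, with `N` as large
as we like. The event that the first `N` coefficients are close to the `c n` has positive
probability since the coefficients are independent with fully supported laws; so does, for a
suitable such `N`, the event that every block `∑_{N ≤ n < M} ξ n • f n` is small, by the almost
sure Cauchy property of the series. The two events are independent, as one depends on `ξ n` for
`n < N` and the other on `ξ n` for `n ≥ N`, and on their intersection `X` is close to `y`.
The converse inclusion holds because `X` lies almost surely in the closed span.
-/

lemma isOpenPosMeasure_gaussianReal (μ : ℝ) {v : NNReal} (hv : v ≠ 0) :
    (gaussianReal μ v).IsOpenPosMeasure :=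
  (gaussianReal_absolutelyContinuous' μ hv).isOpenPosMeasure

lemma eventually_sum_range_smul_eq_of_mem_span {R M : Type*} [Semiring R] [AddCommMonoid M]
    [Module R M] {f : ℕ → M} {y : M} (hy : y ∈ Submodule.span R (Set.range f)) :
    ∃ c : ℕ → R, ∀ᶠ N in atTop, ∑ n ∈ range N, c n • f n = y := by
  obtain ⟨c, rfl⟩ := Finsupp.mem_span_range_iff_exists_finsupp.mp hy
  obtain ⟨N₀, hN₀⟩ := c.support.exists_nat_subset_range
  refine ⟨c, eventually_atTop.mpr ⟨N₀, fun N hN => ?_⟩⟩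
  exact (Finsupp.sum_of_support_subset c (hN₀.trans (range_subset_range.mpr hN))
    (fun n a => a • f n) fun n _ => zero_smul R (f n)).symm

lemma norm_sum_smul_sub_sum_smul_le {ι F : Type*} [NormedAddCommGroup F] [NormedSpace ℝ F]
    (s : Finset ι) (f : ι → F) {a c : ι → ℝ} {δ : ℝ} (h : ∀ i ∈ s, |a i - c i| ≤ δ) :
    ‖∑ i ∈ s, a i • f i - ∑ i ∈ s, c i • f i‖ ≤ δ * ∑ i ∈ s, ‖f i‖ := by
  rw [← sum_sub_distrib, mul_sum]
  refine norm_sum_le_of_le s fun i hi => ?_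
  rw [← sub_smul, norm_smul, Real.norm_eq_abs]
  exact mul_le_mul_of_nonneg_right (h i hi) (norm_nonneg _)

lemma frequently_measure_pos_of_ae_eventually {Ω : Type*} [MeasurableSpace Ω] {P : Measure Ω}
    [NeZero P] {D : ℕ → Set Ω} (h : ∀ᵐ ω ∂P, ∀ᶠ N in atTop, ω ∈ D N) :
    ∃ᶠ N in atTop, 0 < P (D N) := by
  intro hnull
  obtain ⟨N₀, hN₀⟩ := eventually_atTop.mp hnull
  have hout : ∀ᵐ ω ∂P, ∀ N ≥ N₀, ω ∉ D N := by
    refine ae_all_iff.mpr fun N => ?_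
    by_cases hN : N ≥ N₀
    · exact (measure_eq_zero_iff_ae_notMem.mp (not_lt.mp (hN₀ N hN) |>.antisymm bot_le)).mono
        fun ω hω _ => hω
    · exact ae_of_all _ fun ω h => absurd h hN
  obtain ⟨ω, hω, hω'⟩ := (h.and hout).exists
  obtain ⟨N, hωN, hN⟩ := (hω.and (eventually_ge_atTop N₀)).exists
  exact hω' N hN hωN

lemma measurable_iSup_comap {Ω ι κ : Type*} [mκ : MeasurableSpace κ] (ξ : ι → Ω → κ)
    {s : Set ι} {i : ι} (hi : i ∈ s) : Measurable[⨆ j ∈ s, mκ.comap (ξ j)] (ξ i) :=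
  (comap_measurable (ξ i)).mono (le_iSup₂ (f := fun j (_ : j ∈ s) => mκ.comap (ξ j)) i hi) le_rfl

lemma measure_biInter_preimage_pos {Ω ι κ : Type*} [MeasurableSpace Ω] [MeasurableSpace κ]
    [TopologicalSpace κ] [OpensMeasurableSpace κ] {P : Measure Ω} {ξ : ι → Ω → κ}
    (hmeas : ∀ i, Measurable (ξ i)) (hpos : ∀ i, (P.map (ξ i)).IsOpenPosMeasure)
    (hindep : iIndepFun ξ P) (s : Finset ι) {U : ι → Set κ} (hU : ∀ i, IsOpen (U i))
    (hne : ∀ i, (U i).Nonempty) :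
    0 < P (⋂ i ∈ s, ξ i ⁻¹' U i) := by
  rw [hindep.meas_biInter fun i _ => ⟨U i, (hU i).measurableSet, rfl⟩]
  refine CanonicallyOrderedAdd.prod_pos.mpr fun i _ => ?_
  rw [← Measure.map_apply (hmeas i) (hU i).measurableSet]
  exact (hU i).measure_pos _ (hne i)

lemma ProbabilityTheory.iIndepFun.measure_inter_eq_mul_of_disjoint {Ω ι κ : Type*}
    [MeasurableSpace Ω] [mκ : MeasurableSpace κ] {P : Measure Ω} {ξ : ι → Ω → κ} (hmeas : ∀ i, Measurable (ξ i))
    (hindep : iIndepFun ξ P) {S T : Set ι} (hST : Disjoint S T) {A B : Set Ω}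
    (hA : MeasurableSet[⨆ i ∈ S, mκ.comap (ξ i)] A)
    (hB : MeasurableSet[⨆ i ∈ T, mκ.comap (ξ i)] B) :
    P (A ∩ B) = P A * P B :=
  (Indep_iff _ _ _).mp (indep_iSup_of_disjoint (fun i => (hmeas i).comap_le) hindep.iIndep hST)
    A B hA hB

lemma exists_measure_pos_norm_sum_smul_sub_lt {Ω ι F : Type*} [MeasurableSpace Ω]
    [NormedAddCommGroup F] [NormedSpace ℝ F] {P : Measure Ω} {ξ : ι → Ω → ℝ}
    (hmeas : ∀ i, Measurable (ξ i)) (hpos : ∀ i, (P.map (ξ i)).IsOpenPosMeasure)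
    (hindep : iIndepFun ξ P) (s : Finset ι) (c : ι → ℝ) (f : ι → F) {ε : ℝ} (hε : 0 < ε) :
    ∃ E, MeasurableSet[⨆ i ∈ (s : Set ι), MeasurableSpace.comap (ξ i) inferInstance] E ∧
      0 < P E ∧ ∀ ω ∈ E, ‖∑ i ∈ s, ξ i ω • f i - ∑ i ∈ s, c i • f i‖ < ε := by
  set B := ∑ i ∈ s, ‖f i‖
  have hB : 0 ≤ B := sum_nonneg fun i _ => norm_nonneg (f i)
  set δ := ε / (B + 1)
  have hδ : 0 < δ := by positivity
  have hδB : δ * B < ε := by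
    rw [div_mul_eq_mul_div, div_lt_iff₀ (by positivity)]
    nlinarith
  refine ⟨⋂ i ∈ s, ξ i ⁻¹' Metric.ball (c i) δ, ?_, ?_, fun ω hω => ?_⟩
  · exact Finset.measurableSet_biInter _ fun i hi =>
      measurable_iSup_comap ξ (mem_coe.mpr hi) Metric.isOpen_ball.measurableSet
  · exact measure_biInter_preimage_pos hmeas hpos hindep s (fun _ => Metric.isOpen_ball)
      fun _ => Metric.nonempty_ball.mpr hδ
  · refine (norm_sum_smul_sub_sum_smul_le s f fun i hi => ?_).trans_lt hδB
    exact (Metric.mem_ball.mp (Set.mem_iInter₂.mp hω i hi)).le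

section TailBlocks

variable {Ω F : Type*} [NormedAddCommGroup F] [NormedSpace ℝ F]

lemma measurableSet_norm_sum_smul_le {ι : Type*} {m : MeasurableSpace Ω} {ξ : ι → Ω → ℝ}
    {s : Finset ι} (hξ : ∀ i ∈ s, Measurable[m] (ξ i)) (f : ι → F) (r : ℝ) :
    MeasurableSet[m] {ω | ‖∑ i ∈ s, ξ i ω • f i‖ ≤ r} := by
  have hvec : Measurable[m] fun ω (i : s) => ξ i ω := measurable_pi_lambda _ fun i => hξ i i.2
  have hclosed : IsClosed {v : s → ℝ | ‖∑ i : s, v i • f i‖ ≤ r} :=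
    isClosed_le (by fun_prop) continuous_const
  convert hclosed.measurableSet.preimage hvec using 1
  ext ω
  simp only [Set.mem_ofPred_eq, Set.mem_preimage]
  rw [← sum_coe_sort s]

def tailBlockNormLE (ξ : ℕ → Ω → ℝ) (f : ℕ → F) (r : ℝ) (N : ℕ) : Set Ω :=
  {ω | ∀ M, ‖∑ n ∈ Ico N M, ξ n ω • f n‖ ≤ r}

lemma measurableSet_tailBlockNormLE (ξ : ℕ → Ω → ℝ) (f : ℕ → F) (r : ℝ) (N : ℕ) :
    MeasurableSet[⨆ n ∈ Set.Ici N, MeasurableSpace.comap (ξ n) inferInstance]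
      (tailBlockNormLE ξ f r N) := by
  rw [tailBlockNormLE, Set.ofPred_forall]
  refine MeasurableSet.iInter fun M => measurableSet_norm_sum_smul_le (fun n hn => ?_) f r
  exact measurable_iSup_comap ξ (Set.mem_Ici.mpr (mem_Ico.mp hn).1)

variable {ξ : ℕ → Ω → ℝ} {f : ℕ → F} {ω : Ω} {x : F}

lemma eventually_mem_tailBlockNormLE
    (h : Tendsto (fun N => ∑ n ∈ range N, ξ n ω • f n) atTop (𝓝 x)) {r : ℝ} (hr : 0 < r) :
    ∀ᶠ N in atTop, ω ∈ tailBlockNormLE ξ f r N := by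
  obtain ⟨K, hK⟩ := Metric.cauchySeq_iff.mp h.cauchySeq r hr
  refine eventually_atTop.mpr ⟨K, fun N hN M => ?_⟩
  rcases le_total M N with hMN | hNM
  · simp [Ico_eq_empty_of_le hMN, hr.le]
  · rw [sum_Ico_eq_sub _ hNM, ← dist_eq_norm]
    exact (hK M (hN.trans hNM) N hN).le

lemma norm_sub_sum_range_le_of_mem_tailBlockNormLE
    (h : Tendsto (fun N => ∑ n ∈ range N, ξ n ω • f n) atTop (𝓝 x)) {r : ℝ} {N : ℕ}
    (hω : ω ∈ tailBlockNormLE ξ f r N) :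
    ‖x - ∑ n ∈ range N, ξ n ω • f n‖ ≤ r := by
  refine le_of_tendsto (h.sub_const _).norm (eventually_atTop.mpr ⟨N, fun M hM => ?_⟩)
  rw [← sum_Ico_eq_sub _ hM]
  exact hω M

end TailBlocks

theorem measure_preimage_ball_pos_of_mem_span {Ω F : Type*} [NormedAddCommGroup F]
    [NormedSpace ℝ F] [MeasurableSpace Ω] {P : Measure Ω} [IsProbabilityMeasure P]
    {f : ℕ → F} {ξ : ℕ → Ω → ℝ} (hmeas : ∀ n, Measurable (ξ n))
    (hpos : ∀ n, (P.map (ξ n)).IsOpenPosMeasure) (hindep : iIndepFun ξ P) {X : Ω → F}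
    (hconv : ∀ᵐ ω ∂P, Tendsto (fun N => ∑ n ∈ range N, ξ n ω • f n) atTop (𝓝 (X ω)))
    {y : F} (hy : y ∈ Submodule.span ℝ (Set.range f)) {ε : ℝ} (hε : 0 < ε) :
    0 < P (X ⁻¹' Metric.ball y ε) := by
  obtain ⟨c, hc⟩ := eventually_sum_range_smul_eq_of_mem_span hy
  obtain ⟨N, hD, hcN⟩ := (frequently_measure_pos_of_ae_eventually
    (hconv.mono fun ω hω => eventually_mem_tailBlockNormLE hω (half_pos hε))).and_eventually
    hc |>.exists
  obtain ⟨E, hEm, hE, hEy⟩ :=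
    exists_measure_pos_norm_sum_smul_sub_lt hmeas hpos hindep (range N) c f (half_pos hε)
  have hdisj : Disjoint (range N : Set ℕ) (Set.Ici N) :=
    Set.disjoint_left.mpr fun n hn hn' => (mem_range.mp hn).not_ge hn'
  have hED := hindep.measure_inter_eq_mul_of_disjoint hmeas hdisj hEm
    (measurableSet_tailBlockNormLE ξ f (ε / 2) N)
  refine (ENNReal.mul_pos hE.ne' hD.ne').trans_le (hED ▸ measure_mono_ae ?_)
  filter_upwards [hconv] with ω hω ⟨hωE, hωD⟩
  have hhead := hcN ▸ hEy ω hωE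
  calc dist (X ω) y
      ≤ ‖X ω - ∑ n ∈ range N, ξ n ω • f n‖ + ‖∑ n ∈ range N, ξ n ω • f n - y‖ := by
        rw [dist_eq_norm]; exact norm_sub_le_norm_sub_add_norm_sub _ _ _
    _ < ε / 2 + ε / 2 := add_lt_add_of_le_of_lt
        (norm_sub_sum_range_le_of_mem_tailBlockNormLE hω hωD) hhead
    _ = ε := add_halves ε

theorem stmt_5_general {F : Type*} [NormedAddCommGroup F] [NormedSpace ℝ F]
    {Ω : Type*} [MeasurableSpace Ω] (P : Measure Ω) [IsProbabilityMeasure P]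
    (f : ℕ → F) (ξ : ℕ → Ω → ℝ)
    (hmeas : ∀ n, Measurable (ξ n))
    (hlaw : ∀ n, Measure.map (ξ n) P = gaussianReal 0 1)
    (hindep : iIndepFun ξ P)
    (X : Ω → F)
    (hconv : ∀ᵐ ω ∂P,
      Tendsto (fun N => ∑ n ∈ Finset.range N, ξ n ω • f n) atTop (𝓝 (X ω))) :
    {x : F | ∀ U : Set F, IsOpen U → x ∈ U → 0 < P (X ⁻¹' U)} =
      closure (Submodule.span ℝ (Set.range f) : Set F) := by
  set C := closure (Submodule.span ℝ (Set.range f) : Set F)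
  have hXC : ∀ᵐ ω ∂P, X ω ∈ C := hconv.mono fun ω hω =>
    mem_closure_of_tendsto hω (Eventually.of_forall fun N => Submodule.sum_mem _ fun n _ =>
      Submodule.smul_mem _ _ (Submodule.subset_span (Set.mem_range_self n)))
  have hpos n : (P.map (ξ n)).IsOpenPosMeasure :=
    hlaw n ▸ isOpenPosMeasure_gaussianReal 0 one_ne_zero
  ext x
  refine ⟨fun hx => by_contra fun hxC => ?_, fun hx U hU hxU => ?_⟩
  · exact (hx Cᶜ isClosed_closure.isOpen_compl hxC).ne' (measure_eq_zero_iff_ae_notMem.mpr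
      (hXC.mono fun _ h => not_not_intro h))
  · obtain ⟨ε, hε, hball⟩ := Metric.isOpen_iff.mp hU x hxU
    obtain ⟨y, hy, hxy⟩ := Metric.mem_closure_iff.mp hx (ε / 2) (half_pos hε)
    refine (measure_preimage_ball_pos_of_mem_span hmeas hpos hindep hconv hy
      (half_pos hε)).trans_le (measure_mono (Set.preimage_mono ?_))
    refine (Metric.ball_subset_ball' ?_).trans hball
    linarith [dist_comm x y]

/-- If the partial sums `∑_{n < N} ξ n • f n` of a random series with
independent standard Gaussian coefficients `ξ n` converge almost surely in a separable
real Banach space `F` to a random element `X`, then the topological support of the law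
of `X` is the closed linear span of the vectors `f n`. -/
theorem stmt_5 {F : Type*} [NormedAddCommGroup F] [NormedSpace ℝ F]
    [CompleteSpace F] [TopologicalSpace.SeparableSpace F]
    [MeasurableSpace F] [BorelSpace F]
    {Ω : Type*} [MeasurableSpace Ω] (P : Measure Ω) [IsProbabilityMeasure P]
    (f : ℕ → F) (ξ : ℕ → Ω → ℝ)
    (hmeas : ∀ n, Measurable (ξ n))
    (hlaw : ∀ n, Measure.map (ξ n) P = gaussianReal 0 1)
    (hindep : iIndepFun ξ P)
    (X : Ω → F) (hX : Measurable X)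
    (hconv : ∀ᵐ ω ∂P,
      Tendsto (fun N => ∑ n ∈ Finset.range N, ξ n ω • f n) atTop (𝓝 (X ω))) :
    {x : F | ∀ U : Set F, IsOpen U → x ∈ U → 0 < P (X ⁻¹' U)} =
      closure (Submodule.span ℝ (Set.range f) : Set F) :=
  stmt_5_general P f ξ hmeas hlaw hindep X hconv
end

section
/- Let M be a σ-compact, locally compact metric space, N a metric space, and W ⊆ N a closed subset. Let μ be a Borel probability measure on C(M, N) (with the compact-open topology) such that for μ-almost every f ∈ C(M, N) the set f⁻¹(W) is a closed discrete subset of M. Then for every Borel set A ⊆ M the counting function f ↦ #(f⁻¹(W) ∩ A) ∈ ℕ ∪ {∞} is measurable with respect to the μ-completion of the Borel σ-algebra of C(M, N), and the set function A ↦ ∫ #(f⁻¹(W) ∩ A) dμ(f) is a Borel measure on M. -/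
/-!
For `f` with `f ⁻¹' W` closed and discrete, `A ↦ #(f ⁻¹' W ∩ A)` is the locally finite measure
`count.restrict (f ⁻¹' W)`, and the measure we look for is the `μ`-average `μ.bind` of these
measures; everything thus reduces to a.e. measurability of the measure-valued map
`f ↦ count.restrict (f ⁻¹' W)`.

For compact `K`, the maps sending some point of `K` into `W` form a closed set in the compact-open
topology. Since points of `f ⁻¹' W ∩ V` can be separated by pairwise disjoint members of a
countable family of compact sets, `#(f ⁻¹' W ∩ V) ≥ k` is a countable union of finite
intersections of such closed sets, so `f ↦ #(f ⁻¹' W ∩ V)` is measurable for open `V`. A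
measure-valued map that is measurable on open sets and takes locally finite values is measurable
(Dynkin's π-λ theorem on an exhaustion by relatively compact open sets), and local finiteness is a
measurable condition, which handles the exceptional null set.
-/

open MeasureTheory Set
open scoped ENNReal

theorem ContinuousMap.isClosed_setOf_inter_preimage_nonempty {X Y : Type*} [TopologicalSpace X]
    [TopologicalSpace Y] {K : Set X} (hK : IsCompact K) {W : Set Y} (hW : IsClosed W) :
    IsClosed {f : C(X, Y) | (K ∩ f ⁻¹' W).Nonempty} := by
  rw [← isOpen_compl_iff]
  convert ContinuousMap.isOpen_setOfPred_mapsTo hK hW.isOpen_compl using 1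
  ext f
  simp [MapsTo, Set.not_nonempty_iff_eq_empty, Set.eq_empty_iff_forall_notMem]

theorem exists_countable_isCompact_network {X : Type*} [TopologicalSpace X]
    [LocallyCompactSpace X] [RegularSpace X] [SecondCountableTopology X] :
    ∃ 𝒦 : Set (Set X), 𝒦.Countable ∧ (∀ K ∈ 𝒦, IsCompact K) ∧
      ∀ x U, IsOpen U → x ∈ U → ∃ K ∈ 𝒦, x ∈ K ∧ K ⊆ U := by
  let B := TopologicalSpace.countableBasis X
  refine ⟨closure '' {b ∈ B | IsCompact (closure b)},
    (TopologicalSpace.countable_countableBasis X).mono inter_subset_left |>.image _,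
    forall_mem_image.2 fun b hb => hb.2, fun x U hU hxU => ?_⟩
  obtain ⟨V, hV, hxV, hVU, hVc⟩ :=
    exists_open_between_and_isCompact_closure isCompact_singleton hU (singleton_subset_iff.2 hxU)
  obtain ⟨b, hbB, hxb, hbV⟩ := (TopologicalSpace.isBasis_countableBasis X).exists_subset_of_mem_open
    (singleton_subset_iff.1 hxV) hV
  exact ⟨closure b, mem_image_of_mem _ ⟨hbB, hVc.closure_of_subset (hbV.trans subset_closure)⟩,
    subset_closure hxb, (closure_mono hbV).trans hVU⟩

theorem le_encard_inter_iff_exists_pairwiseDisjoint {X ι : Type*} [TopologicalSpace X] [T2Space X]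
    {K : ι → Set X} (hK : ∀ x U, IsOpen U → x ∈ U → ∃ i, x ∈ K i ∧ K i ⊆ U)
    {V : Set X} (hV : IsOpen V) (S : Set X) (k : ℕ) :
    (k : ℕ∞) ≤ (S ∩ V).encard ↔ ∃ s : Finset ι,
      (s.card = k ∧ (s : Set ι).PairwiseDisjoint K ∧ ∀ i ∈ s, K i ⊆ V) ∧
      ∀ i ∈ s, (K i ∩ S).Nonempty := by
  classical
  constructor
  · intro hk
    obtain ⟨t, htS, htk⟩ := exists_subset_encard_eq hk
    obtain ⟨U, hU, hUdisj⟩ := (finite_of_encard_eq_coe htk).t2_separation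
    choose b hb hbU using fun x : t => hK x (U x ∩ V) ((hU x).2.inter hV) ⟨(hU x).1, (htS x.2).2⟩
    have hbU' (x : t) : K (b x) ⊆ U x := (hbU x).trans inter_subset_left
    have hb_inj : Function.Injective b := fun x y hxy => Subtype.ext <|
      hUdisj.elim x.2 y.2 (not_disjoint_iff.2 ⟨y, hbU' x (hxy ▸ hb y), (hU y).1⟩)
    have : Finite t := finite_of_encard_eq_coe htk
    have := Fintype.ofFinite t
    refine ⟨Finset.univ.image b, ⟨?_, ?_, ?_⟩, ?_⟩
    · rw [Finset.card_image_of_injective _ hb_inj, Finset.card_univ, ← ENat.natCast_inj,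
        ← ENat.card_eq_coe_fintype_card, ENat.card_coe_set_eq, htk]
    · rw [Finset.coe_image, Finset.coe_univ, image_univ]
      rintro _ ⟨x, rfl⟩ _ ⟨y, rfl⟩ hxy
      exact (hUdisj x.2 y.2 (Subtype.coe_ne_coe.2 (ne_of_apply_ne b hxy))).mono (hbU' x) (hbU' y)
    · simp only [Finset.forall_mem_image, Finset.mem_univ, forall_const]
      exact fun x => (hbU x).trans inter_subset_right
    · simp only [Finset.forall_mem_image, Finset.mem_univ, forall_const]
      exact fun x => ⟨x, hb x, (htS x.2).1⟩
  · rintro ⟨s, ⟨hsk, hsdisj, hsV⟩, hsS⟩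
    choose p hpK hpS using fun i : (s : Set ι) => hsS i i.2
    have hp_inj : Function.Injective p := fun i j hij => Subtype.ext <|
      hsdisj.elim i.2 j.2 (not_disjoint_iff.2 ⟨p i, hpK i, hij ▸ hpK j⟩)
    calc (k : ℕ∞) = ENat.card (s : Set ι) := by
          rw [ENat.card_coe_set_eq, encard_coe_eq_coe_finsetCard, hsk]
      _ ≤ (range p).encard := hp_inj.encard_range
      _ ≤ (S ∩ V).encard := encard_le_encard <| range_subset_iff.2 fun i =>
          ⟨hpS i, hsV i i.2 (hpK i)⟩

theorem ContinuousMap.measurable_encard_preimage_inter {X Y : Type*} [TopologicalSpace X]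
    [T2Space X] [LocallyCompactSpace X] [SecondCountableTopology X] [TopologicalSpace Y]
    [MeasurableSpace C(X, Y)] [OpensMeasurableSpace C(X, Y)] {W : Set Y} (hW : IsClosed W)
    {V : Set X} (hV : IsOpen V) :
    Measurable fun f : C(X, Y) => (f ⁻¹' W ∩ V).encard := by
  obtain ⟨𝒦, h𝒦c, h𝒦K, h𝒦⟩ := exists_countable_isCompact_network (X := X)
  have : Countable 𝒦 := h𝒦c.to_subtype
  have hle (k : ℕ) : MeasurableSet {f : C(X, Y) | (k : ℕ∞) ≤ (f ⁻¹' W ∩ V).encard} := by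
    have hK : ∀ x U, IsOpen U → x ∈ U → ∃ K : 𝒦, x ∈ (K : Set X) ∧ (K : Set X) ⊆ U :=
      fun x U hU hx => let ⟨K, hK, hxK, hKU⟩ := h𝒦 x U hU hx; ⟨⟨K, hK⟩, hxK, hKU⟩
    convert MeasurableSet.iUnion fun s : Finset 𝒦 => MeasurableSet.iUnion fun
      (_ : s.card = k ∧ (s : Set 𝒦).PairwiseDisjoint ((↑) : 𝒦 → Set X) ∧
        ∀ K ∈ s, (K : Set X) ⊆ V) => MeasurableSet.biInter s.countable_toSet fun K _ =>
        (isClosed_setOf_inter_preimage_nonempty (h𝒦K K K.2) hW).measurableSet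
    ext f
    simp only [mem_ofPred_eq, le_encard_inter_iff_exists_pairwiseDisjoint hK hV, mem_iUnion,
      mem_iInter, exists_prop, Finset.mem_coe]
  refine ENat.measurable_iff.2 fun k => ?_
  convert (hle k).diff (hle (k + 1)) using 1
  ext f
  simp only [mem_preimage, mem_singleton_iff, mem_sdiff, mem_ofPred_eq, not_le, Nat.cast_add,
    Nat.cast_one, ENat.lt_add_one_iff (ENat.natCast_ne_top k)]
  exact le_antisymm_iff.trans and_comm

theorem CompactExhaustion.iUnion_interior {X : Type*} [TopologicalSpace X]
    (K : CompactExhaustion X) :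
    ⋃ n, interior (K n) = univ :=
  eq_univ_of_forall fun x => mem_iUnion.2 <|
    (K.exists_mem_nhds x).imp fun _ => mem_interior_iff_mem_nhds.2

theorem CompactExhaustion.monotone_interior {X : Type*} [TopologicalSpace X]
    (K : CompactExhaustion X) :
    Monotone fun n => interior (K n) :=
  fun _ _ h => interior_mono (K.subset h)

theorem MeasureTheory.isLocallyFiniteMeasure_iff_forall_interior_compactExhaustion
    {X : Type*} [TopologicalSpace X] [MeasurableSpace X] (K : CompactExhaustion X)
    (ν : Measure X) :
    IsLocallyFiniteMeasure ν ↔ ∀ n, ν (interior (K n)) < ∞ := by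
  refine ⟨fun _ n => (measure_mono interior_subset).trans_lt (K.isCompact n).measure_lt_top,
    fun h => ⟨fun x => ?_⟩⟩
  obtain ⟨n, hn⟩ := K.exists_mem_nhds x
  exact ⟨_, interior_mem_nhds.2 hn, h n⟩

section MeasureValued

variable {α X : Type*} [MeasurableSpace α] [TopologicalSpace X] [MeasurableSpace X]
  [SigmaCompactSpace X] [WeaklyLocallyCompactSpace X] {κ : α → Measure X}

theorem MeasureTheory.measurableSet_setOf_isLocallyFiniteMeasure
    (hκ : ∀ U, IsOpen U → Measurable fun a => κ a U) :
    MeasurableSet {a | IsLocallyFiniteMeasure (κ a)} := by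
  simp_rw [isLocallyFiniteMeasure_iff_forall_interior_compactExhaustion
    (CompactExhaustion.choice X), ofPred_forall]
  exact .iInter fun n => measurableSet_lt (hκ _ isOpen_interior) measurable_const

variable [BorelSpace X]

theorem MeasureTheory.Measure.measurable_of_measurable_coe_isOpen
    [∀ a, IsLocallyFiniteMeasure (κ a)] (hκ : ∀ U, IsOpen U → Measurable fun a => κ a U) :
    Measurable κ := by
  set K := CompactExhaustion.choice X
  have hrestrict (n : ℕ) : Measurable fun a => (κ a).restrict (interior (K n)) := by
    have (a : α) : IsFiniteMeasure ((κ a).restrict (interior (K n))) :=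
      isFiniteMeasure_restrict.2 ((isLocallyFiniteMeasure_iff_forall_interior_compactExhaustion
        K (κ a)).1 inferInstance n).ne
    refine .measure_of_isPiSystem BorelSpace.measurable_eq isPiSystem_isOpen (fun U hU => ?_) ?_
    · simpa only [restrict_apply hU.measurableSet] using hκ _ (hU.inter isOpen_interior)
    · simpa only [restrict_apply_univ] using hκ _ isOpen_interior
  refine measurable_measure.2 fun A hA => ?_
  have hA_iSup (a : α) : κ a A = ⨆ n, (κ a).restrict (interior (K n)) A := by
    rw [← restrict_iUnion_apply_eq_iSup K.monotone_interior.directed_le hA, K.iUnion_interior,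
      restrict_univ]
  simp_rw [hA_iSup]
  exact .iSup fun n => (measurable_coe hA).comp (hrestrict n)

theorem MeasureTheory.Measure.aemeasurable_of_measurable_coe_isOpen {μ : Measure α}
    (hκ : ∀ U, IsOpen U → Measurable fun a => κ a U)
    (hfin : ∀ᵐ a ∂μ, IsLocallyFiniteMeasure (κ a)) :
    AEMeasurable κ μ := by
  set G := {a | IsLocallyFiniteMeasure (κ a)}
  have hG : MeasurableSet G := measurableSet_setOf_isLocallyFiniteMeasure hκ
  have (a : α) : IsLocallyFiniteMeasure (G.indicator κ a) := by
    by_cases ha : a ∈ G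
    · rw [indicator_of_mem ha]; exact ha
    · rw [indicator_of_notMem ha]; infer_instance
  have hG_apply (a : α) (U : Set X) : G.indicator κ a U = G.indicator (κ · U) a := by
    by_cases ha : a ∈ G <;> simp [ha]
  refine ⟨G.indicator κ, measurable_of_measurable_coe_isOpen fun U hU => ?_,
    hfin.mono fun a ha => (indicator_of_mem (show a ∈ G from ha) κ).symm⟩
  simpa only [hG_apply] using (hκ U hU).indicator hG

end MeasureValued

theorem MeasureTheory.Measure.isLocallyFiniteMeasure_count_restrict {X : Type*}
    [TopologicalSpace X] [WeaklyLocallyCompactSpace X] [MeasurableSpace X] [OpensMeasurableSpace X]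
    [MeasurableSingletonClass X] {S : Set X} (hS : IsClosed S) (hS' : IsDiscrete S) :
    IsLocallyFiniteMeasure (count.restrict S) := by
  refine ⟨fun x => ?_⟩
  obtain ⟨C, hC, hCx⟩ := exists_compact_mem_nhds x
  refine ⟨C, hCx, ?_⟩
  rw [restrict_apply' hS.measurableSet, count_apply_lt_top]
  exact (hC.inter_right hS).finite (hS'.mono inter_subset_right)

theorem stmt_7_general {M N : Type*} [MetricSpace M] [SigmaCompactSpace M] [LocallyCompactSpace M]
    [MeasurableSpace M] [BorelSpace M] [MetricSpace N]
    [MeasurableSpace C(M, N)] [BorelSpace C(M, N)]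
    (W : Set N) (hW : IsClosed W)
    (μ : Measure C(M, N))
    (hdisc : ∀ᵐ (f : C(M, N)) ∂μ, IsClosed ((⇑f) ⁻¹' W) ∧ DiscreteTopology ((⇑f) ⁻¹' W)) :
    (∀ A : Set M, MeasurableSet A →
      NullMeasurable (fun f : C(M, N) => (((⇑f) ⁻¹' W ∩ A).encard : ENNReal)) μ) ∧
    ∃ ν : Measure M, ∀ A : Set M, MeasurableSet A →
      ν A = ∫⁻ f, (((⇑f) ⁻¹' W ∩ A).encard : ENNReal) ∂μ := by
  set κ := fun f : C(M, N) => Measure.count.restrict ((⇑f) ⁻¹' W)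
  have hκ_apply (f : C(M, N)) {A : Set M} (hA : MeasurableSet A) :
      κ f A = (((⇑f) ⁻¹' W ∩ A).encard : ENNReal) := by
    rw [Measure.restrict_apply hA, Measure.count_apply
      (hA.inter (hW.preimage f.continuous).measurableSet), inter_comm]
  have hκ : AEMeasurable κ μ := by
    refine Measure.aemeasurable_of_measurable_coe_isOpen (fun U hU => ?_) <|
      hdisc.mono fun f ⟨hclosed, hdiscrete⟩ =>
        Measure.isLocallyFiniteMeasure_count_restrict hclosed ⟨hdiscrete⟩
    simp_rw [hκ_apply _ hU.measurableSet]
    exact (measurable_of_countable _).comp (ContinuousMap.measurable_encard_preimage_inter hW hU)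
  refine ⟨fun A hA => ?_, μ.bind κ, fun A hA => ?_⟩
  · simpa only [Function.comp_def, hκ_apply _ hA] using
      ((Measure.measurable_coe hA).comp_aemeasurable hκ).nullMeasurable
  · rw [Measure.bind_apply hA hκ]
    exact lintegral_congr fun f => hκ_apply f hA

/-- Let `M` be a σ-compact locally compact metric space, `N` a metric
space, `W ⊆ N` closed, and let `μ` be a Borel probability measure on `C(M, N)`
(compact-open topology) such that almost every `f` has `(⇑f) ⁻¹' W` closed and discrete.
Then for every Borel `A ⊆ M` the counting function `f ↦ #((⇑f) ⁻¹' W ∩ A)` (with values in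
`ℕ ∪ {∞} ⊆ ℝ≥0∞`) is measurable for the `μ`-completion of the Borel σ-algebra, and
`A ↦ ∫ #((⇑f) ⁻¹' W ∩ A) dμ(f)` extends to a Borel measure on `M`. -/
theorem stmt_7 {M N : Type*} [MetricSpace M] [SigmaCompactSpace M] [LocallyCompactSpace M]
    [MeasurableSpace M] [BorelSpace M] [MetricSpace N]
    [MeasurableSpace C(M, N)] [BorelSpace C(M, N)]
    (W : Set N) (hW : IsClosed W)
    (μ : Measure C(M, N)) [IsProbabilityMeasure μ]
    (hdisc : ∀ᵐ (f : C(M, N)) ∂μ, IsClosed ((⇑f) ⁻¹' W) ∧ DiscreteTopology ((⇑f) ⁻¹' W)) :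
    (∀ A : Set M, MeasurableSet A →
      NullMeasurable (fun f : C(M, N) => (((⇑f) ⁻¹' W ∩ A).encard : ENNReal)) μ) ∧
    ∃ ν : Measure M, ∀ A : Set M, MeasurableSet A →
      ν A = ∫⁻ f, (((⇑f) ⁻¹' W ∩ A).encard : ENNReal) ∂μ :=
  stmt_7_general W hW μ hdisc
end

section
/- Let M, N and T be metrizable topological spaces, let K ⊆ N be a closed subset, let φ : K → T be a continuous map, and let A ⊆ M be a compact subset. Then the function from C(M, N) × T to ℕ ∪ {∞} given by (f, t) ↦ #(f⁻¹(φ⁻¹(t)) ∩ A) is Borel measurable, where C(M, N) carries the compact-open topology. Moreover, for each ε > 0, the function (f, t) ↦ #_ε(f⁻¹(φ⁻¹(t)) ∩ A), where #_ε(S) is the minimum number of open sets of diameter less than ε needed to cover S (for a fixed metric on M), is upper semicontinuous. -/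
/-!
A finite open cover `U` of the fibre over `(f, t)` also covers the fibres over all nearby
`(f', t')`: the part `A \ U` of `A` is compact and `f` maps it, paired with `t`, off the closed set
`{(y, t) | y ∈ K, φ y = t}`, so by the tube lemma the same holds on a compact-open neighbourhood of
`(f, t)`. Hence every covering number of the fibre, in particular `#_ε`, is upper semicontinuous.
The cardinality of a set is the supremum over `n` of its covering numbers by open sets of
extended diameter at most `1 / n`, because a finite set is `1 / n`-separated for large `n`;
as a countable supremum of upper semicontinuous functions it is Borel measurable.
-/

open Topology Metric

/-- `covNumber ε S` is the minimum number of open sets of diameter less than `ε` needed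
to cover `S` (`∞ ∈ ℝ≥0∞` if no finite cover exists). -/
noncomputable def covNumber {M : Type*} [MetricSpace M] (ε : ℝ) (S : Set M) : ENNReal :=
  sInf ((fun 𝒰 : Finset (Set M) => (𝒰.card : ENNReal)) ''
    {𝒰 : Finset (Set M) | (∀ U ∈ 𝒰, IsOpen U ∧ Metric.diam U < ε) ∧ S ⊆ ⋃ U ∈ 𝒰, U})

open scoped ENNReal

noncomputable def openCoverNumber {M : Type*} [TopologicalSpace M] (P : Set M → Prop)
    (S : Set M) : ℝ≥0∞ :=
  sInf ((fun 𝒰 : Finset (Set M) => (𝒰.card : ℝ≥0∞)) ''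
    {𝒰 : Finset (Set M) | (∀ U ∈ 𝒰, IsOpen U ∧ P U) ∧ S ⊆ ⋃ U ∈ 𝒰, U})

theorem covNumber_eq_openCoverNumber {M : Type*} [MetricSpace M] (ε : ℝ) (S : Set M) :
    covNumber ε S = openCoverNumber (fun U => diam U < ε) S :=
  rfl

section OpenCoverNumber

variable {M : Type*} [TopologicalSpace M] {P : Set M → Prop} {S : Set M}

theorem openCoverNumber_le_card {𝒰 : Finset (Set M)} (h𝒰 : ∀ U ∈ 𝒰, IsOpen U ∧ P U)
    (hS : S ⊆ ⋃ U ∈ 𝒰, U) : openCoverNumber P S ≤ 𝒰.card :=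
  sInf_le ⟨𝒰, ⟨h𝒰, hS⟩, rfl⟩

theorem le_openCoverNumber {c : ℝ≥0∞}
    (h : ∀ 𝒰 : Finset (Set M), (∀ U ∈ 𝒰, IsOpen U ∧ P U) → S ⊆ ⋃ U ∈ 𝒰, U → c ≤ 𝒰.card) :
    c ≤ openCoverNumber P S :=
  le_sInf <| by
    rintro - ⟨𝒰, ⟨h𝒰, hS⟩, rfl⟩
    exact h 𝒰 h𝒰 hS

theorem exists_card_lt_of_openCoverNumber_lt {c : ℝ≥0∞} (h : openCoverNumber P S < c) :
    ∃ 𝒰 : Finset (Set M),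
      (∀ U ∈ 𝒰, IsOpen U ∧ P U) ∧ S ⊆ (⋃ U ∈ 𝒰, U) ∧ (𝒰.card : ℝ≥0∞) < c := by
  obtain ⟨-, ⟨𝒰, ⟨h𝒰, hS⟩, rfl⟩, hlt⟩ := sInf_lt_iff.mp h
  exact ⟨𝒰, h𝒰, hS, hlt⟩

theorem upperSemicontinuous_openCoverNumber {X : Type*} [TopologicalSpace X] {F : X → Set M}
    (hF : ∀ x U, IsOpen U → F x ⊆ U → ∀ᶠ y in 𝓝 x, F y ⊆ U) (P : Set M → Prop) :
    UpperSemicontinuous fun x => openCoverNumber P (F x) := by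
  intro x c hc
  obtain ⟨𝒰, h𝒰, hcover, hlt⟩ := exists_card_lt_of_openCoverNumber_lt hc
  filter_upwards [hF x _ (isOpen_biUnion fun U hU => (h𝒰 U hU).1) hcover] with y hy
  exact (openCoverNumber_le_card h𝒰 hy).trans_lt hlt

end OpenCoverNumber

section PseudoEMetric

variable {M : Type*} [PseudoEMetricSpace M]

/-- A set of `ediam ≤ ε` contains at most one point of an `ε`-separated set. -/
theorem encard_le_openCoverNumber_of_isSeparated {ε : ℝ≥0∞} {t S : Set M} (htS : t ⊆ S)
    (ht : IsSeparated ε t) : (t.encard : ℝ≥0∞) ≤ openCoverNumber (fun U => ediam U ≤ ε) S := by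
  refine le_openCoverNumber fun 𝒰 h𝒰 hS => ?_
  have hmem : ∀ x ∈ t, ∃ U ∈ 𝒰, x ∈ U := fun x hx => by simpa using hS (htS hx)
  choose! V hV𝒰 hxV using hmem
  have hinj : Set.InjOn V t := by
    intro x hx y hy hxy
    by_contra hne
    have hdist : edist x y ≤ ε :=
      ((edist_le_ediam_of_mem (hxV x hx) (hxy ▸ hxV y hy)).trans (h𝒰 _ (hV𝒰 x hx)).2)
    exact (ht hx hy hne).not_ge hdist
  have := Set.encard_le_encard_of_injOn (t := (𝒰 : Set (Set M))) hV𝒰 hinj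
  rw [Set.encard_coe_eq_coe_finsetCard] at this
  exact_mod_cast this

theorem openCoverNumber_le_encard {ε : ℝ≥0∞} (hε : ε ≠ 0) (S : Set M) :
    openCoverNumber (fun U => ediam U ≤ ε) S ≤ S.encard := by
  classical
  rcases S.finite_or_infinite with hS | hS
  · have hε2 : 0 < ε / 2 := ENNReal.half_pos hε
    have hcard : ((hS.toFinset.image fun x => eball x (ε / 2)).card : ℝ≥0∞) ≤ S.encard := by
      rw [hS.encard_eq_coe_toFinset_card]
      exact_mod_cast Finset.card_image_le
    refine (openCoverNumber_le_card ?_ ?_).trans hcard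
    · simp only [Finset.mem_image, Set.Finite.mem_toFinset]
      rintro - ⟨x, -, rfl⟩
      refine ⟨isOpen_eball, ediam_eball_le.trans_eq ?_⟩
      exact ENNReal.mul_div_cancel two_ne_zero ENNReal.ofNat_ne_top
    · intro x hx
      simpa using ⟨x, hx, mem_eball_self hε2⟩
  · simp [hS.encard_eq]

end PseudoEMetric

section EMetric

variable {M : Type*} [EMetricSpace M]

theorem Set.Finite.exists_isSeparated_inv_natCast {t : Set M} (ht : t.Finite) :
    ∃ n : ℕ, IsSeparated (n : ℝ≥0∞)⁻¹ t := by
  obtain ⟨n, hn⟩ := ENNReal.exists_inv_nat_lt ht.einfsep_pos.ne'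
  exact ⟨n, fun x hx y hy hxy => hn.trans_le (Set.einfsep_le_edist_of_mem hx hy hxy)⟩

/-- Diameters are measured by `ediam` here: `Metric.diam`, used by `covNumber`, is `0` on
unbounded sets, so `covNumber ε S` may be `1` for an infinite `S`. -/
theorem encard_eq_iSup_openCoverNumber (S : Set M) :
    (S.encard : ℝ≥0∞) = ⨆ n : ℕ, openCoverNumber (fun U => ediam U ≤ (n : ℝ≥0∞)⁻¹) S := by
  set c := ⨆ n : ℕ, openCoverNumber (fun U => ediam U ≤ (n : ℝ≥0∞)⁻¹) S
  have hfinite : ∀ t ⊆ S, t.Finite → (t.encard : ℝ≥0∞) ≤ c := fun t htS ht => by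
    obtain ⟨n, hn⟩ := ht.exists_isSeparated_inv_natCast
    exact (encard_le_openCoverNumber_of_isSeparated htS hn).trans (le_iSup_of_le n le_rfl)
  refine le_antisymm ?_ (iSup_le fun n => openCoverNumber_le_encard (by simp) S)
  rcases S.finite_or_infinite with hS | hS
  · exact hfinite S subset_rfl hS
  · rw [hS.encard_eq]
    by_contra! hc
    obtain ⟨k, hk⟩ := ENNReal.exists_nat_gt hc.ne
    obtain ⟨t, htS, htk⟩ := Set.exists_subset_encard_eq (k := k) (hS.encard_eq ▸ le_top)
    have := hfinite t htS (Set.finite_of_encard_eq_coe htk)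
    rw [htk] at this
    exact (this.trans_lt hk).ne (by simp)

end EMetric

section FiberOfGraph

variable {M N T : Type*} [TopologicalSpace M] [TopologicalSpace N] [TopologicalSpace T]

theorem eventually_setOf_mem_inter_subset {Z : Set (N × T)} (hZ : IsClosed Z) {A : Set M}
    (hA : IsCompact A) {p : C(M, N) × T} {U : Set M} (hU : IsOpen U)
    (hpU : {x | (p.1 x, p.2) ∈ Z} ∩ A ⊆ U) : ∀ᶠ q in 𝓝 p, {x | (q.1 x, q.2) ∈ Z} ∩ A ⊆ U := by
  have hC : IsCompact (A \ U) := hA.diff hU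
  have hdisj : (p.1 '' (A \ U)) ×ˢ {p.2} ⊆ Zᶜ := by
    rintro ⟨-, t⟩ ⟨⟨x, hx, rfl⟩, rfl : t = p.2⟩ hZx
    exact hx.2 (hpU ⟨hZx, hx.1⟩)
  obtain ⟨O, W, hO, hW, hpO, hpW, hOW⟩ :=
    generalized_tube_lemma (hC.image p.1.continuous) isCompact_singleton hZ.isOpen_compl hdisj
  have hnhds : {f : C(M, N) | Set.MapsTo f (A \ U) O} ×ˢ W ∈ 𝓝 p :=
    ((ContinuousMap.isOpen_setOfPred_mapsTo hC hO).prod hW).mem_nhds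
      ⟨fun x hx => hpO ⟨x, hx, rfl⟩, hpW rfl⟩
  filter_upwards [hnhds] with q hq x ⟨hZx, hxA⟩
  by_contra hxU
  exact hOW ⟨hq.1 ⟨hxA, hxU⟩, hq.2⟩ hZx

theorem isClosed_setOf_mem_image_val_preimage_singleton [T2Space T] {K : Set N}
    (hK : IsClosed K) (φ : C(K, T)) :
    IsClosed {y : N × T | y.1 ∈ Subtype.val '' (φ ⁻¹' {y.2})} := by
  have himage : {y : N × T | y.1 ∈ Subtype.val '' (φ ⁻¹' {y.2})} =
      Prod.map Subtype.val id '' {q : K × T | φ q.1 = q.2} := by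
    ext ⟨y, t⟩
    simp [eq_comm]
  rw [himage]
  exact (hK.isClosedEmbedding_subtypeVal.prodMap .id).isClosedMap _
    (isClosed_eq (φ.continuous.comp continuous_fst) continuous_snd)

end FiberOfGraph

theorem stmt_8_general {M N T : Type*} [MetricSpace M]
    [TopologicalSpace N]
    [TopologicalSpace T] [TopologicalSpace.MetrizableSpace T]
    [MeasurableSpace (C(M, N) × T)] [BorelSpace (C(M, N) × T)]
    (K : Set N) (hK : IsClosed K) (φ : C(K, T))
    (A : Set M) (hA : IsCompact A) :
    Measurable (fun p : C(M, N) × T =>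
      (((⇑p.1) ⁻¹' (Subtype.val '' ((⇑φ) ⁻¹' {p.2})) ∩ A).encard : ENNReal)) ∧
    ∀ ε : ℝ, 0 < ε → UpperSemicontinuous (fun p : C(M, N) × T =>
      covNumber ε ((⇑p.1) ⁻¹' (Subtype.val '' ((⇑φ) ⁻¹' {p.2})) ∩ A)) := by
  have hF : ∀ (p : C(M, N) × T) (U : Set M), IsOpen U →
      (⇑p.1) ⁻¹' (Subtype.val '' ((⇑φ) ⁻¹' {p.2})) ∩ A ⊆ U →
      ∀ᶠ q : C(M, N) × T in 𝓝 p, (⇑q.1) ⁻¹' (Subtype.val '' ((⇑φ) ⁻¹' {q.2})) ∩ A ⊆ U :=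
    fun _ _ hU => eventually_setOf_mem_inter_subset
      (isClosed_setOf_mem_image_val_preimage_singleton hK φ) hA hU
  refine ⟨?_, fun ε _ => ?_⟩
  · simp_rw [encard_eq_iSup_openCoverNumber]
    exact Measurable.iSup fun n => (upperSemicontinuous_openCoverNumber hF _).measurable
  · simp_rw [covNumber_eq_openCoverNumber]
    exact upperSemicontinuous_openCoverNumber hF _

/-- Let `M, N, T` be metrizable (with a fixed metric on `M`), `K ⊆ N`
closed, `φ : K → T` continuous, and `A ⊆ M` compact. Then
`(f, t) ↦ #(f⁻¹(φ⁻¹(t)) ∩ A)` is Borel measurable on `C(M, N) × T` (with the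
compact-open topology on `C(M, N)`), and for every `ε > 0` the function
`(f, t) ↦ #_ε(f⁻¹(φ⁻¹(t)) ∩ A)` is upper semicontinuous. -/
theorem stmt_8 {M N T : Type*} [MetricSpace M]
    [TopologicalSpace N] [TopologicalSpace.MetrizableSpace N]
    [TopologicalSpace T] [TopologicalSpace.MetrizableSpace T]
    [MeasurableSpace (C(M, N) × T)] [BorelSpace (C(M, N) × T)]
    (K : Set N) (hK : IsClosed K) (φ : C(K, T))
    (A : Set M) (hA : IsCompact A) :
    Measurable (fun p : C(M, N) × T =>
      (((⇑p.1) ⁻¹' (Subtype.val '' ((⇑φ) ⁻¹' {p.2})) ∩ A).encard : ENNReal)) ∧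
    ∀ ε : ℝ, 0 < ε → UpperSemicontinuous (fun p : C(M, N) × T =>
      covNumber ε ((⇑p.1) ⁻¹' (Subtype.val '' ((⇑φ) ⁻¹' {p.2})) ∩ A)) :=
  stmt_8_general K hK φ A hA
end

section
/- Let E be a finite-dimensional real inner product space and let V, W ⊆ E be linear subspaces with V ⊄ W and W ⊄ V (so also Vᗮ ⊄ Wᗮ and Wᗮ ⊄ Vᗮ). Let v₁, …, v_a be an orthonormal basis of V ∩ (V ∩ W)ᗮ and w₁, …, w_b an orthonormal basis of W ∩ (V ∩ W)ᗮ, and likewise let v'₁, …, v'_{a'} be an orthonormal basis of Vᗮ ∩ (Vᗮ ∩ Wᗮ)ᗮ and w'₁, …, w'_{b'} an orthonormal basis of Wᗮ ∩ (Vᗮ ∩ Wᗮ)ᗮ. Then the Gram determinants of the two concatenated systems coincide: det(⟨z_i, z_j⟩)_{i,j}, where (z_1,…,z_{a+b}) = (v₁,…,v_a, w₁,…,w_b), equals det(⟨z'_i, z'_j⟩)_{i,j}, where (z'_1,…,z'_{a'+b'}) = (v'₁,…,v'_{a'}, w'₁,…,w'_{b'}). Equivalently, the angle between subspaces satisfies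 σ(Vᗮ, Wᗮ) = σ(V, W). -/
/-!
Write `U = (V ⊓ W)ᗮ ⊓ (Vᗮ ⊓ Wᗮ)ᗮ`. The orthogonal projection onto `W` maps `U` into itself, so `U`
splits as `(W ⊓ U) ⊔ (Wᗮ ⊓ U)`, and symmetrically for `V`; hence `(w, w')` and `(v, v')` are
orthonormal bases of the same space `U`. With `C = ⟪v, w⟫`, `C' = ⟪v', w'⟫` and `K = ⟪v, w'⟫`,
Parseval in `U` gives `1 - C Cᵀ = K Kᵀ` and `1 - C'ᵀ C' = Kᵀ K`. The Schur complement turns the two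
Gram determinants into `det (1 - C Cᵀ)` and `det (1 - C' C'ᵀ) = det (1 - C'ᵀ C')`, and `K` is square
because both `V ⊓ (V ⊓ W)ᗮ` and `Wᗮ ⊓ (Vᗮ ⊓ Wᗮ)ᗮ` have dimension `dim V - dim (V ⊓ W)`.
-/

open scoped RealInnerProductSpace
open Submodule Module Matrix

section CrossGram

variable {E : Type*} [NormedAddCommGroup E] [InnerProductSpace ℝ E]
variable {ι κ ι' κ' : Type*}

def crossGram (x : ι → E) (y : κ → E) : Matrix ι κ ℝ := Matrix.of fun i j => ⟪x i, y j⟫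

lemma Orthonormal.crossGram_self [DecidableEq ι] {x : ι → E} (hx : Orthonormal ℝ x) :
    crossGram x x = 1 := by
  ext i j
  exact orthonormal_iff_ite.mp hx i j

lemma crossGram_sumElim_sumElim (x : ι → E) (x' : ι' → E) (y : κ → E) (y' : κ' → E) :
    crossGram (Sum.elim x x') (Sum.elim y y') =
      fromBlocks (crossGram x y) (crossGram x y') (crossGram x' y) (crossGram x' y') := by
  ext (i | i) (j | j) <;> rfl

lemma crossGram_sumElim_mul_crossGram_sumElim [Fintype κ] [Fintype κ'] (x : ι → E) (y : ι' → E)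
    (u : κ → E) (u' : κ' → E) :
    crossGram x (Sum.elim u u') * crossGram (Sum.elim u u') y =
      crossGram x u * crossGram u y + crossGram x u' * crossGram u' y := by
  ext i j
  simp only [mul_apply, Matrix.add_apply, Fintype.sum_sum_type]
  rfl

lemma Orthonormal.sumElim {x : ι → E} {y : κ → E} (hx : Orthonormal ℝ x) (hy : Orthonormal ℝ y)
    (hxy : ∀ i j, ⟪x i, y j⟫ = 0) : Orthonormal ℝ (Sum.elim x y) := by
  classical
  rw [orthonormal_iff_ite] at hx hy ⊢
  rintro (i | i) (j | j)
  · simpa using hx i j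
  · simpa using hxy i j
  · simpa [real_inner_comm] using hxy j i
  · simpa using hy i j

lemma Orthonormal.inner_eq_sum_of_mem_span [Fintype κ] {u : κ → E} (hu : Orthonormal ℝ u)
    {x : E} (hx : x ∈ span ℝ (Set.range u)) (y : E) :
    ⟪x, y⟫ = ∑ j, ⟪x, u j⟫ * ⟪u j, y⟫ := by
  obtain ⟨c, rfl⟩ := (mem_span_range_iff_exists_fun ℝ).mp hx
  simp_rw [hu.inner_left_fintype, conj_trivial, sum_inner, real_inner_smul_left]

lemma Orthonormal.crossGram_mul_crossGram [Fintype κ] {u : κ → E} (hu : Orthonormal ℝ u)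
    {x : ι → E} (hx : ∀ i, x i ∈ span ℝ (Set.range u)) (y : ι' → E) :
    crossGram x u * crossGram u y = crossGram x y := by
  ext i j
  exact (hu.inner_eq_sum_of_mem_span (hx i) (y j)).symm

lemma Orthonormal.one_sub_crossGram_mul_crossGram [Fintype κ] [Fintype κ'] [DecidableEq ι]
    {x : ι → E} {u : κ → E} {u' : κ' → E} (hx : Orthonormal ℝ x)
    (hu : Orthonormal ℝ (Sum.elim u u')) (hxu : ∀ i, x i ∈ span ℝ (Set.range (Sum.elim u u'))) :
    1 - crossGram x u * crossGram u x = crossGram x u' * crossGram u' x := by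
  rw [← hx.crossGram_self, ← hu.crossGram_mul_crossGram hxu,
    crossGram_sumElim_mul_crossGram_sumElim, add_sub_cancel_left]

lemma det_crossGram_finAppend {a b : ℕ} {v : Fin a → E} {w : Fin b → E}
    (hv : Orthonormal ℝ v) (hw : Orthonormal ℝ w) :
    (crossGram (Fin.append v w) (Fin.append v w)).det =
      (1 - crossGram v w * crossGram w v).det := by
  have happend : Fin.append v w ∘ finSumFinEquiv = Sum.elim v w := Fin.append_comp_sumElim
  rw [← det_submatrix_equiv_self finSumFinEquiv]
  change (crossGram (Fin.append v w ∘ finSumFinEquiv) (Fin.append v w ∘ finSumFinEquiv)).det = _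
  rw [happend, crossGram_sumElim_sumElim, hv.crossGram_self, hw.crossGram_self,
    det_fromBlocks_one₂₂]

end CrossGram

section Subspaces

variable {E : Type*} [NormedAddCommGroup E] [InnerProductSpace ℝ E]

lemma mem_sup_of_mem_orthogonal_inf (V W : Submodule ℝ E) [W.HasOrthogonalProjection] {x : E}
    (hx : x ∈ (V ⊓ W)ᗮ) (hx' : x ∈ (Vᗮ ⊓ Wᗮ)ᗮ) :
    x ∈ (W ⊓ (V ⊓ W)ᗮ) ⊔ (Wᗮ ⊓ (Vᗮ ⊓ Wᗮ)ᗮ) := by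
  set y := W.starProjection x
  have hyW : y ∈ W := W.starProjection_apply_mem x
  have hyVW : y ∈ (V ⊓ W)ᗮ := by
    intro u hu
    rw [← W.inner_starProjection_left_eq_right, W.starProjection_eq_self_iff.mpr hu.2]
    exact hx u hu
  have hyVW' : y ∈ (Vᗮ ⊓ Wᗮ)ᗮ := W.le_orthogonal_orthogonal.trans (orthogonal_le inf_le_right) hyW
  rw [← add_sub_cancel y x]
  exact add_mem_sup ⟨hyW, hyVW⟩ ⟨W.sub_starProjection_mem_orthogonal x, sub_mem hx' hyVW'⟩

lemma finrank_inf_orthogonal_inf_eq [FiniteDimensional ℝ E] (V W : Submodule ℝ E) :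
    finrank ℝ ↥(V ⊓ (V ⊓ W)ᗮ) = finrank ℝ ↥(Wᗮ ⊓ (Vᗮ ⊓ Wᗮ)ᗮ) := by
  have hV := finrank_add_inf_finrank_orthogonal (inf_le_left : V ⊓ W ≤ V)
  have hW := finrank_add_inf_finrank_orthogonal (inf_le_right : Vᗮ ⊓ Wᗮ ≤ Wᗮ)
  have hsup := (V ⊔ W).finrank_add_finrank_orthogonal
  rw [← inf_orthogonal] at hsup
  have hWperp := W.finrank_add_finrank_orthogonal
  have hsupinf := finrank_sup_add_finrank_inf_eq V W
  rw [inf_comm V, inf_comm Wᗮ]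
  omega

end Subspaces

theorem stmt_19_general {E : Type*} [NormedAddCommGroup E] [InnerProductSpace ℝ E]
    [FiniteDimensional ℝ E]
    (V W : Submodule ℝ E)
    {a b a' b' : ℕ}
    (v : Fin a → E) (w : Fin b → E) (v' : Fin a' → E) (w' : Fin b' → E)
    (hv : Orthonormal ℝ v) (hw : Orthonormal ℝ w)
    (hv' : Orthonormal ℝ v') (hw' : Orthonormal ℝ w')
    (hvs : Submodule.span ℝ (Set.range v) = V ⊓ (V ⊓ W)ᗮ)
    (hws : Submodule.span ℝ (Set.range w) = W ⊓ (V ⊓ W)ᗮ)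
    (hvs' : Submodule.span ℝ (Set.range v') = Vᗮ ⊓ (Vᗮ ⊓ Wᗮ)ᗮ)
    (hws' : Submodule.span ℝ (Set.range w') = Wᗮ ⊓ (Vᗮ ⊓ Wᗮ)ᗮ) :
    (Matrix.of fun i j : Fin (a + b) =>
        ⟪Fin.append v w i, Fin.append v w j⟫).det =
      (Matrix.of fun i j : Fin (a' + b') =>
        ⟪Fin.append v' w' i, Fin.append v' w' j⟫).det := by
  have hvV i : v i ∈ V ⊓ (V ⊓ W)ᗮ := hvs ▸ subset_span ⟨i, rfl⟩
  have hwW i : w i ∈ W ⊓ (V ⊓ W)ᗮ := hws ▸ subset_span ⟨i, rfl⟩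
  have hvV' i : v' i ∈ Vᗮ ⊓ (Vᗮ ⊓ Wᗮ)ᗮ := hvs' ▸ subset_span ⟨i, rfl⟩
  have hwW' i : w' i ∈ Wᗮ ⊓ (Vᗮ ⊓ Wᗮ)ᗮ := hws' ▸ subset_span ⟨i, rfl⟩
  obtain rfl : a = b' := by
    have hdim := finrank_inf_orthogonal_inf_eq V W
    rwa [← hvs, ← hws', finrank_span_eq_card hv.linearIndependent,
      finrank_span_eq_card hw'.linearIndependent, Fintype.card_fin, Fintype.card_fin] at hdim
  have hww' := hw.sumElim hw' fun i j => (hwW' j).1 _ (hwW i).1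
  have hvv' := hv.sumElim hv' fun i j => (hvV' j).1 _ (hvV i).1
  have hv_mem i : v i ∈ span ℝ (Set.range (Sum.elim w w')) := by
    rw [Set.Sum.elim_range, span_union, hws, hws']
    exact mem_sup_of_mem_orthogonal_inf V W (hvV i).2
      (V.le_orthogonal_orthogonal.trans (orthogonal_le inf_le_left) (hvV i).1)
  have hw'_mem i : w' i ∈ span ℝ (Set.range (Sum.elim v v')) := by
    rw [Set.Sum.elim_range, span_union, hvs, hvs', inf_comm V W, inf_comm Vᗮ Wᗮ]
    exact mem_sup_of_mem_orthogonal_inf W V (orthogonal_le inf_le_left (hwW' i).1)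
      (by rw [inf_comm]; exact (hwW' i).2)
  calc (crossGram (Fin.append v w) (Fin.append v w)).det
      = (1 - crossGram v w * crossGram w v).det := det_crossGram_finAppend hv hw
    _ = (crossGram v w' * crossGram w' v).det := by
        rw [hv.one_sub_crossGram_mul_crossGram hww' hv_mem]
    _ = (crossGram w' v * crossGram v w').det := det_mul_comm _ _
    _ = (1 - crossGram w' v' * crossGram v' w').det := by
        rw [← hw'.one_sub_crossGram_mul_crossGram hvv' hw'_mem, sub_sub_cancel]
    _ = (1 - crossGram v' w' * crossGram w' v').det := det_one_sub_mul_comm _ _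
    _ = (crossGram (Fin.append v' w') (Fin.append v' w')).det :=
        (det_crossGram_finAppend hv' hw').symm

/-- Let `V, W` be subspaces of a finite-dimensional real inner product
space with `V ⊄ W` and `W ⊄ V`. Given orthonormal bases `v` of `V ⊓ (V ⊓ W)ᗮ`, `w` of
`W ⊓ (V ⊓ W)ᗮ`, `v'` of `Vᗮ ⊓ (Vᗮ ⊓ Wᗮ)ᗮ` and `w'` of `Wᗮ ⊓ (Vᗮ ⊓ Wᗮ)ᗮ`, the Gram
determinants of the concatenated systems `(v, w)` and `(v', w')` coincide; equivalently,
`σ(Vᗮ, Wᗮ) = σ(V, W)`. -/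
theorem stmt_19 {E : Type*} [NormedAddCommGroup E] [InnerProductSpace ℝ E]
    [FiniteDimensional ℝ E]
    (V W : Submodule ℝ E) (hVW : ¬V ≤ W) (hWV : ¬W ≤ V)
    {a b a' b' : ℕ}
    (v : Fin a → E) (w : Fin b → E) (v' : Fin a' → E) (w' : Fin b' → E)
    (hv : Orthonormal ℝ v) (hw : Orthonormal ℝ w)
    (hv' : Orthonormal ℝ v') (hw' : Orthonormal ℝ w')
    (hvs : Submodule.span ℝ (Set.range v) = V ⊓ (V ⊓ W)ᗮ)
    (hws : Submodule.span ℝ (Set.range w) = W ⊓ (V ⊓ W)ᗮ)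
    (hvs' : Submodule.span ℝ (Set.range v') = Vᗮ ⊓ (Vᗮ ⊓ Wᗮ)ᗮ)
    (hws' : Submodule.span ℝ (Set.range w') = Wᗮ ⊓ (Vᗮ ⊓ Wᗮ)ᗮ) :
    (Matrix.of fun i j : Fin (a + b) =>
        ⟪Fin.append v w i, Fin.append v w j⟫).det =
      (Matrix.of fun i j : Fin (a' + b') =>
        ⟪Fin.append v' w' i, Fin.append v' w' j⟫).det :=
  stmt_19_general V W v w v' w' hv hw hv' hw' hvs hws hvs' hws'
end
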